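/- arXiv:2110.13328 — 2 statements merged into one kernel-verified Lean document; each statement's English description precedes it below -/
import Mathlib

section
/- Lower bound on the eigenvalues of K: define r(λ) = λ³ + (μD_max − μA_min − μE_min)λ² + (μA_min·μE_min − μA_min·μD_max − μD_max·μE_min − σB_max² − σC_max²)λ + (μA_min·μD_max·μE_min + μA_min·σC_max² + σB_max²·μE_min). If ρ < 0 satisfies r(ρ) = 0 (ρ is the unique negative root of r), then every eigenvalue λ of K satisfies λ ≥ ρ. -/
/-!
Write an eigenvector as `(x, y, z)` and test each block row of `K v = λ v` against its own
block. If `λ < ρ < 0`, the diagonal blocks `A - λ` and `E - λ` are positive definite, so the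
first and last rows force the coupling terms `s = xᵀ Bᵀ y` and `t = zᵀ C y` to be
non-positive with `(μA - λ) (-s) ≤ σB² ‖y‖²` and `(μE - λ) (-t) ≤ σC² ‖y‖²` (Cauchy–Schwarz);
in particular `y ≠ 0`. The middle row gives `s + t ≤ (λ + μD) ‖y‖²`, and together these say
`r(λ) ≥ 0`. But `r(λ) / ((μA - λ)(μE - λ)) = λ + μD + σB² / (μA - λ) + σC² / (μE - λ)` is
strictly increasing below `min μA μE` and vanishes at `ρ`, so `r(λ) < 0`.
-/

open Matrix

def saddleCubic (a d e b c lam : ℝ) : ℝ :=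
  (lam + d) * (a - lam) * (e - lam) + b * (e - lam) + c * (a - lam)

theorem saddleCubic_eq (a d e b c lam : ℝ) :
    saddleCubic a d e b c lam = lam ^ 3 + (d - a - e) * lam ^ 2 +
      (a * e - a * d - d * e - b - c) * lam + (a * d * e + a * c + b * e) := by
  unfold saddleCubic; ring

theorem saddleCubic_neg_of_lt_root {a d e b c ρ lam : ℝ} (hb : 0 ≤ b) (hc : 0 ≤ c)
    (ha : ρ < a) (he : ρ < e) (hroot : saddleCubic a d e b c ρ = 0) (hlt : lam < ρ) :
    saddleCubic a d e b c lam < 0 := by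
  have hal : 0 < a - lam := by linarith
  have hel : 0 < e - lam := by linarith
  have haρ : 0 < a - ρ := by linarith
  have heρ : 0 < e - ρ := by linarith
  have hcof : 0 < (a - ρ) * (e - ρ) * ((a - lam) * (e - lam)) + b * ((e - ρ) * (e - lam))
      + c * ((a - ρ) * (a - lam)) := by positivity
  -- clears the denominators of `r(ρ) / ((a - ρ)(e - ρ)) - r(λ) / ((a - λ)(e - λ))`
  have hid : saddleCubic a d e b c ρ * ((a - lam) * (e - lam))
      - saddleCubic a d e b c lam * ((a - ρ) * (e - ρ))
      = (ρ - lam) * ((a - ρ) * (e - ρ) * ((a - lam) * (e - lam)) + b * ((e - ρ) * (e - lam))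
          + c * ((a - ρ) * (a - lam))) := by
    unfold saddleCubic; ring
  rw [hroot, zero_mul, zero_sub] at hid
  have hneg : saddleCubic a d e b c lam * ((a - ρ) * (e - ρ)) < 0 := by
    nlinarith [mul_pos (sub_pos.2 hlt) hcof]
  exact neg_of_mul_neg_left hneg (by positivity)

theorem saddleCubic_nonneg {a d e b c lam s t Y : ℝ} (hY : 0 < Y) (ha : lam < a) (he : lam < e)
    (hs : (a - lam) * -s ≤ b * Y) (ht : (e - lam) * -t ≤ c * Y) (hst : s + t ≤ (lam + d) * Y) :
    0 ≤ saddleCubic a d e b c lam := by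
  have hal : 0 < a - lam := by linarith
  have hel : 0 < e - lam := by linarith
  have hsum : 0 ≤ saddleCubic a d e b c lam * Y := by
    unfold saddleCubic
    nlinarith [mul_le_mul_of_nonneg_left hst (mul_pos hal hel).le,
      mul_le_mul_of_nonneg_left hs hel.le, mul_le_mul_of_nonneg_left ht hal.le]
  exact nonneg_of_mul_nonneg_left hsum hY

section DotProduct

variable {ι κ : Type*} [Fintype ι] [Fintype κ]

theorem dotProduct_self_nonneg {R : Type*} [Ring R] [LinearOrder R] [IsStrictOrderedRing R]
    (v : ι → R) : 0 ≤ v ⬝ᵥ v :=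
  Finset.sum_nonneg fun i _ => mul_self_nonneg (v i)

theorem sq_dotProduct_le (u w : ι → ℝ) : (u ⬝ᵥ w) ^ 2 ≤ (u ⬝ᵥ u) * (w ⬝ᵥ w) := by
  simpa [dotProduct, sq] using Finset.sum_mul_sq_le_sq_mul_sq Finset.univ u w

theorem sq_mulVec_dotProduct_le {M : Matrix κ ι ℝ} {σ : ℝ}
    (hM : ∀ u, M *ᵥ u ⬝ᵥ M *ᵥ u ≤ σ ^ 2 * (u ⬝ᵥ u)) (u : ι → ℝ) (w : κ → ℝ) :
    (M *ᵥ u ⬝ᵥ w) ^ 2 ≤ σ ^ 2 * (u ⬝ᵥ u) * (w ⬝ᵥ w) :=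
  (sq_dotProduct_le _ w).trans (mul_le_mul_of_nonneg_right (hM u) (dotProduct_self_nonneg w))

variable {M : Matrix ι ι ℝ} {w g : ι → ℝ} {μ lam β : ℝ}

theorem sub_mul_dotProduct_self_le (hM : μ * (w ⬝ᵥ w) ≤ w ⬝ᵥ M *ᵥ w)
    (heq : M *ᵥ w + g = lam • w) : (μ - lam) * (w ⬝ᵥ w) ≤ -(w ⬝ᵥ g) := by
  have h := congrArg (w ⬝ᵥ ·) heq
  simp only [dotProduct_add, dotProduct_smul, smul_eq_mul] at h
  linarith

theorem eq_zero_of_mulVec_eq_smul (hM : ∀ u, μ * (u ⬝ᵥ u) ≤ u ⬝ᵥ M *ᵥ u) (hlam : lam < μ)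
    (heq : M *ᵥ w = lam • w) : w = 0 := by
  have h := sub_mul_dotProduct_self_le (g := 0) (hM w) (by rwa [add_zero])
  rw [dotProduct_zero, neg_zero] at h
  exact dotProduct_self_eq_zero.mp
    (le_antisymm (nonpos_of_mul_nonpos_right h (sub_pos.2 hlam)) (dotProduct_self_nonneg w))

theorem sub_mul_neg_dotProduct_le (hM : μ * (w ⬝ᵥ w) ≤ w ⬝ᵥ M *ᵥ w) (hlam : lam < μ)
    (heq : M *ᵥ w + g = lam • w) (hg : (w ⬝ᵥ g) ^ 2 ≤ β * (w ⬝ᵥ w)) (hβ : 0 ≤ β) :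
    (μ - lam) * -(w ⬝ᵥ g) ≤ β := by
  have hdiag := sub_mul_dotProduct_self_le hM heq
  rcases (dotProduct_self_nonneg w).eq_or_lt with hw | hw
  · rw [← hw, mul_zero] at hg
    rw [pow_eq_zero_iff two_ne_zero |>.mp (le_antisymm hg (sq_nonneg _))]
    simpa using hβ
  · have hs : 0 ≤ -(w ⬝ᵥ g) := (mul_nonneg (sub_pos.2 hlam).le hw.le).trans hdiag
    have : (w ⬝ᵥ w) * ((μ - lam) * -(w ⬝ᵥ g)) ≤ (w ⬝ᵥ w) * β := by
      nlinarith [mul_le_mul_of_nonneg_right hdiag hs]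
    exact le_of_mul_le_mul_left this hw

end DotProduct

theorem doubleSaddle_mulVec_eq_smul_iff {ι κ τ R : Type*} [Fintype ι] [Fintype κ] [Fintype τ]
    [Ring R] (A : Matrix ι ι R) (B : Matrix κ ι R) (C : Matrix τ κ R) (D : Matrix κ κ R)
    (E : Matrix τ τ R) (x : ι → R) (y : κ → R) (z : τ → R) (lam : R) :
    fromBlocks (fromBlocks A Bᵀ B (-D)) (fromRows 0 Cᵀ) (fromCols 0 C) E *ᵥ
        Sum.elim (Sum.elim x y) z = lam • Sum.elim (Sum.elim x y) z ↔
      A *ᵥ x + Bᵀ *ᵥ y = lam • x ∧ B *ᵥ x - D *ᵥ y + Cᵀ *ᵥ z = lam • y ∧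
        C *ᵥ y + E *ᵥ z = lam • z := by
  rw [show lam • Sum.elim (Sum.elim x y) z = Sum.elim (Sum.elim (lam • x) (lam • y)) (lam • z)
    by ext ((i | i) | i) <;> rfl]
  simp only [fromBlocks_mulVec, Sum.elim_comp_inl, Sum.elim_comp_inr, fromRows_mulVec,
    fromCols_mulVec_sumElim, zero_mulVec, zero_add, neg_mulVec, ← Sum.elim_add_add,
    add_zero, Sum.elim_eq_iff, sub_eq_add_neg, and_assoc]

theorem stmt_6_general (n m p : ℕ)
    (A : Matrix (Fin n) (Fin n) ℝ) (B : Matrix (Fin m) (Fin n) ℝ)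
    (C : Matrix (Fin p) (Fin m) ℝ) (D : Matrix (Fin m) (Fin m) ℝ)
    (E : Matrix (Fin p) (Fin p) ℝ)
    (K : Matrix ((Fin n ⊕ Fin m) ⊕ Fin p) ((Fin n ⊕ Fin m) ⊕ Fin p) ℝ)
    (hK : K = fromBlocks (fromBlocks A Bᵀ B (-D)) (fromRows 0 Cᵀ) (fromCols 0 C) E)
    -- spectral parameters
    (μAmin μAmax μDmin μDmax μEmin μEmax σBmax σCmax : ℝ)
    (hμA0 : 0 < μAmin)
    (hAbnd : ∀ x : Fin n → ℝ,
      μAmin * (x ⬝ᵥ x) ≤ x ⬝ᵥ A.mulVec x ∧ x ⬝ᵥ A.mulVec x ≤ μAmax * (x ⬝ᵥ x))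
    (hDbnd : ∀ y : Fin m → ℝ,
      μDmin * (y ⬝ᵥ y) ≤ y ⬝ᵥ D.mulVec y ∧ y ⬝ᵥ D.mulVec y ≤ μDmax * (y ⬝ᵥ y))
    (hμE0 : 0 ≤ μEmin)
    (hEbnd : ∀ z : Fin p → ℝ,
      μEmin * (z ⬝ᵥ z) ≤ z ⬝ᵥ E.mulVec z ∧ z ⬝ᵥ E.mulVec z ≤ μEmax * (z ⬝ᵥ z))
    (hBmax : ∀ x : Fin n → ℝ, B.mulVec x ⬝ᵥ B.mulVec x ≤ σBmax ^ 2 * (x ⬝ᵥ x))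
    (hCmax : ∀ y : Fin m → ℝ, C.mulVec y ⬝ᵥ C.mulVec y ≤ σCmax ^ 2 * (y ⬝ᵥ y))
    -- ρ is the unique negative root of r
    (ρ : ℝ) (hρneg : ρ < 0)
    (hρroot : ρ ^ 3 + (μDmax - μAmin - μEmin) * ρ ^ 2 +
        (μAmin * μEmin - μAmin * μDmax - μDmax * μEmin - σBmax ^ 2 - σCmax ^ 2) * ρ +
        (μAmin * μDmax * μEmin + μAmin * σCmax ^ 2 + σBmax ^ 2 * μEmin) = 0) :
    ∀ (lam : ℝ) (v : (Fin n ⊕ Fin m) ⊕ Fin p → ℝ), v ≠ 0 → K.mulVec v = lam • v →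
      ρ ≤ lam := by
  intro lam v hv heig
  by_contra! hlt
  obtain ⟨x, y, z, rfl⟩ : ∃ x y z, v = Sum.elim (Sum.elim x y) z :=
    ⟨_, _, _, by rw [Sum.elim_comp_inl_inr, Sum.elim_comp_inl_inr]⟩
  rw [hK, doubleSaddle_mulVec_eq_smul_iff] at heig
  obtain ⟨hx, hy, hz⟩ := heig
  rw [add_comm (C *ᵥ y)] at hz
  have hlamA : lam < μAmin := by linarith
  have hlamE : lam < μEmin := by linarith
  have hy0 : y ≠ 0 := by
    rintro rfl
    simp only [mulVec_zero, add_zero] at hx hz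
    rw [eq_zero_of_mulVec_eq_smul (fun u => (hAbnd u).1) hlamA hx,
      eq_zero_of_mulVec_eq_smul (fun u => (hEbnd u).1) hlamE hz] at hv
    exact hv (by ext ((i | i) | i) <;> rfl)
  have hs := sub_mul_neg_dotProduct_le (hAbnd x).1 hlamA hx (β := σBmax ^ 2 * (y ⬝ᵥ y))
    (by rw [dotProduct_transpose_mulVec, dotProduct_comm]
        exact (sq_mulVec_dotProduct_le hBmax x y).trans_eq (by ring))
    (mul_nonneg (sq_nonneg _) (dotProduct_self_nonneg y))
  have ht := sub_mul_neg_dotProduct_le (hEbnd z).1 hlamE hz (β := σCmax ^ 2 * (y ⬝ᵥ y))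
    (by rw [dotProduct_comm]; exact sq_mulVec_dotProduct_le hCmax y z)
    (mul_nonneg (sq_nonneg _) (dotProduct_self_nonneg y))
  have hmid : y ⬝ᵥ B *ᵥ x - y ⬝ᵥ D *ᵥ y + z ⬝ᵥ C *ᵥ y = lam * (y ⬝ᵥ y) := by
    simpa only [dotProduct_add, dotProduct_sub, dotProduct_smul, smul_eq_mul,
      dotProduct_transpose_mulVec] using congrArg (y ⬝ᵥ ·) hy
  rw [dotProduct_transpose_mulVec] at hs
  have hY : 0 < y ⬝ᵥ y :=
    (dotProduct_self_nonneg y).lt_of_ne' (mt dotProduct_self_eq_zero.mp hy0)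
  have hroot := (saddleCubic_eq μAmin μDmax μEmin (σBmax ^ 2) (σCmax ^ 2) ρ).trans hρroot
  have := saddleCubic_nonneg (d := μDmax) hY hlamA hlamE hs ht (by linarith [(hDbnd y).2])
  exact this.not_gt (saddleCubic_neg_of_lt_root (sq_nonneg _) (sq_nonneg _) (by linarith)
    (by linarith) hroot hlt)

/-- Lower bound on the eigenvalues of the double saddle-point matrix `K`:
every eigenvalue is at least the (unique) negative root of the cubic `r`. -/
theorem stmt_6 (n m p : ℕ) (hn : 0 < n) (hm : 0 < m) (hp : 0 < p)
    (A : Matrix (Fin n) (Fin n) ℝ) (B : Matrix (Fin m) (Fin n) ℝ)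
    (C : Matrix (Fin p) (Fin m) ℝ) (D : Matrix (Fin m) (Fin m) ℝ)
    (E : Matrix (Fin p) (Fin p) ℝ)
    (hA : A.PosDef) (hD : D.PosSemidef) (hE : E.PosSemidef)
    (S₁ : Matrix (Fin m) (Fin m) ℝ) (hS₁ : S₁ = D + B * A⁻¹ * Bᵀ)
    (S₂ : Matrix (Fin p) (Fin p) ℝ) (hS₂ : S₂ = E + C * S₁⁻¹ * Cᵀ)
    (hS₁pd : S₁.PosDef) (hS₂pd : S₂.PosDef)
    (K : Matrix ((Fin n ⊕ Fin m) ⊕ Fin p) ((Fin n ⊕ Fin m) ⊕ Fin p) ℝ)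
    (hK : K = fromBlocks (fromBlocks A Bᵀ B (-D)) (fromRows 0 Cᵀ) (fromCols 0 C) E)
    -- spectral parameters
    (μAmin μAmax μDmin μDmax μEmin μEmax σBmax σBmin σCmax σCmin : ℝ)
    (hμA0 : 0 < μAmin) (hμA : μAmin ≤ μAmax)
    (hAbnd : ∀ x : Fin n → ℝ,
      μAmin * (x ⬝ᵥ x) ≤ x ⬝ᵥ A.mulVec x ∧ x ⬝ᵥ A.mulVec x ≤ μAmax * (x ⬝ᵥ x))
    (hμD0 : 0 ≤ μDmin) (hμD : μDmin ≤ μDmax)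
    (hDbnd : ∀ y : Fin m → ℝ,
      μDmin * (y ⬝ᵥ y) ≤ y ⬝ᵥ D.mulVec y ∧ y ⬝ᵥ D.mulVec y ≤ μDmax * (y ⬝ᵥ y))
    (hμE0 : 0 ≤ μEmin) (hμE : μEmin ≤ μEmax)
    (hEbnd : ∀ z : Fin p → ℝ,
      μEmin * (z ⬝ᵥ z) ≤ z ⬝ᵥ E.mulVec z ∧ z ⬝ᵥ E.mulVec z ≤ μEmax * (z ⬝ᵥ z))
    (hσBmax : 0 < σBmax)
    (hBmax : ∀ x : Fin n → ℝ, B.mulVec x ⬝ᵥ B.mulVec x ≤ σBmax ^ 2 * (x ⬝ᵥ x))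
    (hσBmin : 0 ≤ σBmin)
    (hBmin : ∀ y : Fin m → ℝ, σBmin ^ 2 * (y ⬝ᵥ y) ≤ Bᵀ.mulVec y ⬝ᵥ Bᵀ.mulVec y)
    (hσCmax : 0 < σCmax)
    (hCmax : ∀ y : Fin m → ℝ, C.mulVec y ⬝ᵥ C.mulVec y ≤ σCmax ^ 2 * (y ⬝ᵥ y))
    (hσCmin : 0 ≤ σCmin)
    (hCmin : ∀ z : Fin p → ℝ, σCmin ^ 2 * (z ⬝ᵥ z) ≤ Cᵀ.mulVec z ⬝ᵥ Cᵀ.mulVec z)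
    -- ρ is the unique negative root of r
    (ρ : ℝ) (hρneg : ρ < 0)
    (hρroot : ρ ^ 3 + (μDmax - μAmin - μEmin) * ρ ^ 2 +
        (μAmin * μEmin - μAmin * μDmax - μDmax * μEmin - σBmax ^ 2 - σCmax ^ 2) * ρ +
        (μAmin * μDmax * μEmin + μAmin * σCmax ^ 2 + σBmax ^ 2 * μEmin) = 0) :
    ∀ (lam : ℝ) (v : (Fin n ⊕ Fin m) ⊕ Fin p → ℝ), v ≠ 0 → K.mulVec v = lam • v →
      ρ ≤ lam :=
  stmt_6_general n m p A B C D E K hK μAmin μAmax μDmin μDmax μEmin μEmax σBmax σCmax hμA0 hAbnd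
    hDbnd hμE0 hEbnd hBmax hCmax ρ hρneg hρroot
end

section
/- Negative eigenvalue bounds for the approximately preconditioned matrix: define w(λ) = λ³ + (β₁ − α₀)λ² − (α₀β₁ + β₀β₁ + β₁β₂)λ + α₀β₁β₂, and let ρ_w < 0 satisfy w(ρ_w) = 0 (the unique negative root of w). Then every negative eigenvalue λ of M̃⁻¹K satisfies ρ_w ≤ λ ≤ (β₀ − √(β₀² + 4·α₀α₁/(1 + η_D))) / 2. -/
/-!
Write an eigenvector as `(x, y, z)`. For `λ < 0` the matrix `G = A - λÃ` is positive semidefinite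
with `G x = -Bᵀy`, the first and last block rows force `y ≠ 0`, and the middle row tested
against `y` reads `xᵀGx + yᵀDy - yᵀCᵀz = -λ yᵀS̃₁y` with `yᵀCᵀz ≤ 0`.

Upper bound: `α₀ G ≤ (α₀ - λ) A`, so Cauchy–Schwarz for `G` gives
`α₀ yᵀBA⁻¹Bᵀy ≤ (α₀ - λ) xᵀGx ≤ (α₀ - λ)(-λ) yᵀS̃₁y`, while
`α₁ yᵀS̃₁y ≤ yᵀS₁y ≤ (1 + η_D) yᵀBA⁻¹Bᵀy`. Hence `α₀α₁ / (1 + η_D) ≤ λ² - β₀λ`.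

Lower bound: Cauchy–Schwarz for `A` and for `S₁` bounds the couplings,
`(β₀ - λ) xᵀGx ≤ β₀β₁ yᵀS̃₁y` and `-λ |yᵀCᵀz| ≤ β₁β₂ yᵀS̃₁y`; with `yᵀDy ≤ β₁ yᵀS̃₁y`, the
middle row multiplied by `(α₀ - λ)(-λ)` becomes `w(λ) yᵀS̃₁y ≥ 0`, and `w < 0` to the left of its
negative root.
-/

open Matrix

theorem Sum.smul_elim {α β M γ : Type*} [SMul M γ] (c : M) (f : α → γ) (g : β → γ) :
    c • Sum.elim f g = Sum.elim (c • f) (c • g) := by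
  ext (i | i) <;> rfl

theorem mul_le_of_sq_le_mul {u p P Q β K : ℝ} (hu : 0 ≤ u) (hp : 0 ≤ p) (hQ : 0 ≤ Q)
    (hβ : 0 ≤ β) (hsq : u ^ 2 ≤ P * Q) (hP : P * p ≤ β * u) (hQK : Q ≤ K) :
    u * p ≤ β * K := by
  rcases hu.eq_or_lt with rfl | hu
  · simpa using mul_nonneg hβ (hQ.trans hQK)
  refine le_of_mul_le_mul_left ?_ hu
  calc u * (u * p) = u ^ 2 * p := by ring
    _ ≤ P * Q * p := by gcongr
    _ = P * p * Q := by ring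
    _ ≤ β * u * K := by gcongr
    _ = u * (β * K) := by ring

theorem le_half_sub_sqrt_of_le {lam β c : ℝ} (hlam : 2 * lam ≤ β)
    (hc : c ≤ 4 * (lam ^ 2 - β * lam)) : lam ≤ (β - √(β ^ 2 + c)) / 2 := by
  have : √(β ^ 2 + c) ≤ β - 2 * lam :=
    Real.sqrt_le_iff.mpr ⟨by linarith, by linarith⟩
  linarith

theorem le_of_cubic_nonneg {b c d ρ t : ℝ} (hc : 0 ≤ c) (hd : 0 < d) (hρ : ρ < 0)
    (hρroot : ρ ^ 3 + b * ρ ^ 2 - c * ρ + d = 0) (ht : t ≤ 0)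
    (hw : 0 ≤ t ^ 3 + b * t ^ 2 - c * t + d) : ρ ≤ t := by
  have hlin : b + ρ < 0 := by
    have : (b + ρ) * ρ ^ 2 = c * ρ - d := by linear_combination hρroot
    nlinarith [mul_nonpos_of_nonneg_of_nonpos hc hρ.le]
  have hconst : 0 < ρ ^ 2 + b * ρ - c := by
    have : ρ * (ρ ^ 2 + b * ρ - c) = -d := by linear_combination hρroot
    nlinarith
  have hq : 0 < t ^ 2 + (b + ρ) * t + (ρ ^ 2 + b * ρ - c) := by
    nlinarith [sq_nonneg t, mul_nonneg_of_nonpos_of_nonpos hlin.le ht]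
  have hfactor : t ^ 3 + b * t ^ 2 - c * t + d
      = (t - ρ) * (t ^ 2 + (b + ρ) * t + (ρ ^ 2 + b * ρ - c)) := by
    linear_combination hρroot
  by_contra! htρ
  rw [hfactor] at hw
  exact (mul_neg_of_neg_of_pos (sub_neg.mpr htρ) hq).not_ge hw

namespace Matrix

theorem PosSemidef.sub_smul {n : Type*} {A A' : Matrix n n ℝ} {c : ℝ} (hA : A.PosSemidef)
    (hA' : A'.PosSemidef) (hc : c ≤ 0) : (A - c • A').PosSemidef := by
  simpa [sub_eq_add_neg] using hA.add (hA'.smul (neg_nonneg.mpr hc))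

variable {m n : Type*} [Fintype m] [Fintype n]

theorem dotProduct_mul_mul_transpose_mulVec (B : Matrix m n ℝ) (M : Matrix n n ℝ) (y : m → ℝ) :
    y ⬝ᵥ (B * M * Bᵀ) *ᵥ y = (Bᵀ *ᵥ y) ⬝ᵥ M *ᵥ (Bᵀ *ᵥ y) := by
  rw [← mulVec_mulVec, ← mulVec_mulVec, ← dotProduct_transpose_mulVec, dotProduct_comm]

theorem dotProduct_sub_smul_mulVec (A A' : Matrix n n ℝ) (c : ℝ) (x : n → ℝ) :
    x ⬝ᵥ (A - c • A') *ᵥ x = x ⬝ᵥ A *ᵥ x - c * (x ⬝ᵥ A' *ᵥ x) := by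
  rw [sub_mulVec, smul_mulVec, dotProduct_sub, dotProduct_smul, smul_eq_mul]

theorem PosSemidef.sq_dotProduct_mulVec_le {M : Matrix n n ℝ} (hM : M.PosSemidef)
    (x w : n → ℝ) : (x ⬝ᵥ M *ᵥ w) ^ 2 ≤ (x ⬝ᵥ M *ᵥ x) * (w ⬝ᵥ M *ᵥ w) := by
  let _ := M.toSeminormedAddCommGroup hM
  let _ := M.toInnerProductSpace hM
  have hinner : ∀ a b : n → ℝ, inner ℝ a b = a ⬝ᵥ M *ᵥ b := fun a b => by
    change (M *ᵥ b) ⬝ᵥ star a = _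
    rw [dotProduct_comm]; rfl
  have h := real_inner_mul_inner_self_le x w
  rwa [hinner, hinner, hinner, ← sq] at h

theorem PosDef.eq_zero_of_mulVec_eq_smul {P Q : Matrix n n ℝ} {lam : ℝ} {v : n → ℝ}
    (hP : P.PosDef) (hQ : Q.PosSemidef) (hlam : lam ≤ 0) (h : P *ᵥ v = lam • (Q *ᵥ v)) :
    v = 0 := by
  by_contra hv
  have hpos : 0 < v ⬝ᵥ P *ᵥ v := hP.dotProduct_mulVec_pos hv
  rw [h, dotProduct_smul, smul_eq_mul] at hpos
  exact hpos.not_ge (mul_nonpos_of_nonpos_of_nonneg hlam (hQ.dotProduct_mulVec_nonneg v))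

variable [DecidableEq n]

theorem PosDef.mulVec_inv_mulVec {A : Matrix n n ℝ} (hA : A.PosDef) (u : n → ℝ) :
    A *ᵥ (A⁻¹ *ᵥ u) = u := by
  rw [mulVec_mulVec, mul_nonsing_inv _ ((isUnit_iff_isUnit_det A).mp hA.isUnit), one_mulVec]

theorem PosDef.dotProduct_mul_inv_mul_transpose_mulVec_nonneg {A : Matrix n n ℝ}
    (hA : A.PosDef) (B : Matrix m n ℝ) (y : m → ℝ) : 0 ≤ y ⬝ᵥ (B * A⁻¹ * Bᵀ) *ᵥ y := by
  rw [dotProduct_mul_mul_transpose_mulVec]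
  exact hA.inv.posSemidef.dotProduct_mulVec_nonneg (Bᵀ *ᵥ y)

theorem PosDef.sq_dotProduct_le {A : Matrix n n ℝ} (hA : A.PosDef) (x u : n → ℝ) :
    (x ⬝ᵥ u) ^ 2 ≤ (x ⬝ᵥ A *ᵥ x) * (u ⬝ᵥ A⁻¹ *ᵥ u) := by
  have h := hA.posSemidef.sq_dotProduct_mulVec_le x (A⁻¹ *ᵥ u)
  rwa [hA.mulVec_inv_mulVec, dotProduct_comm (A⁻¹ *ᵥ u)] at h

theorem PosDef.mul_dotProduct_inv_mulVec_le {A G : Matrix n n ℝ} {α c : ℝ} {x u : n → ℝ}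
    (hA : A.PosDef) (hG : G.PosSemidef) (hα : 0 ≤ α) (hc : 0 ≤ c)
    (hGA : ∀ w, α * (w ⬝ᵥ G *ᵥ w) ≤ c * (w ⬝ᵥ A *ᵥ w)) (hx : G *ᵥ x = u) :
    α * (u ⬝ᵥ A⁻¹ *ᵥ u) ≤ c * (x ⬝ᵥ G *ᵥ x) := by
  set w := A⁻¹ *ᵥ u
  set r := u ⬝ᵥ w
  have hAw : w ⬝ᵥ A *ᵥ w = r := by rw [hA.mulVec_inv_mulVec, dotProduct_comm]
  have hGw : x ⬝ᵥ G *ᵥ w = r := by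
    rw [← dotProduct_transpose_mulVec, (isHermitian_iff_isSymm.mp hG.isHermitian).eq, hx,
      dotProduct_comm]
  have hr : 0 ≤ r := hAw ▸ hA.posSemidef.dotProduct_mulVec_nonneg w
  have hg : 0 ≤ x ⬝ᵥ G *ᵥ x := hG.dotProduct_mulVec_nonneg x
  rcases hr.eq_or_lt with hr0 | hr
  · rw [← hr0, mul_zero]; positivity
  have hcs := hG.sq_dotProduct_mulVec_le x w
  rw [hGw] at hcs
  refine le_of_mul_le_mul_left ?_ hr
  calc r * (α * r) = α * r ^ 2 := by ring
    _ ≤ α * ((x ⬝ᵥ G *ᵥ x) * (w ⬝ᵥ G *ᵥ w)) := by gcongr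
    _ = (x ⬝ᵥ G *ᵥ x) * (α * (w ⬝ᵥ G *ᵥ w)) := by ring
    _ ≤ (x ⬝ᵥ G *ᵥ x) * (c * r) := by rw [← hAw]; exact mul_le_mul_of_nonneg_left (hGA w) hg
    _ = r * (c * (x ⬝ᵥ G *ᵥ x)) := by ring

end Matrix

namespace SaddlePoint

variable {l m n : Type*} [Fintype l] [Fintype m] [Fintype n]
  {A Atil : Matrix n n ℝ} {B : Matrix m n ℝ} {C : Matrix l m ℝ} {D S₁til : Matrix m m ℝ}
  {E S₂til : Matrix l l ℝ} {lam : ℝ} {x : n → ℝ} {y : m → ℝ} {z : l → ℝ}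

theorem mulVec_eq_smul_mulVec_iff :
    fromBlocks (fromBlocks A Bᵀ B (-D)) (fromRows 0 Cᵀ) (fromCols 0 C) E *ᵥ
        Sum.elim (Sum.elim x y) z =
      lam • (fromBlocks (fromBlocks Atil 0 0 S₁til) 0 0 S₂til *ᵥ Sum.elim (Sum.elim x y) z) ↔
    A *ᵥ x + Bᵀ *ᵥ y = lam • (Atil *ᵥ x) ∧
      B *ᵥ x - D *ᵥ y + Cᵀ *ᵥ z = lam • (S₁til *ᵥ y) ∧
      C *ᵥ y + E *ᵥ z = lam • (S₂til *ᵥ z) := by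
  simp only [fromBlocks_mulVec, fromRows_mulVec, fromCols_mulVec_sumElim, Sum.elim_comp_inl,
    Sum.elim_comp_inr, ← Sum.elim_add_add, Sum.smul_elim, Sum.elim_eq_iff, zero_mulVec,
    add_zero, zero_add, sub_eq_add_neg, neg_mulVec, and_assoc]

theorem sub_smul_mulVec_eq (h₁ : A *ᵥ x + Bᵀ *ᵥ y = lam • (Atil *ᵥ x)) :
    (A - lam • Atil) *ᵥ x = -(Bᵀ *ᵥ y) := by
  rw [sub_mulVec, smul_mulVec, ← h₁]
  abel

theorem middle_row (h₁ : A *ᵥ x + Bᵀ *ᵥ y = lam • (Atil *ᵥ x))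
    (h₂ : B *ᵥ x - D *ᵥ y + Cᵀ *ᵥ z = lam • (S₁til *ᵥ y)) :
    x ⬝ᵥ (A - lam • Atil) *ᵥ x + y ⬝ᵥ D *ᵥ y - y ⬝ᵥ Cᵀ *ᵥ z = -lam * (y ⬝ᵥ S₁til *ᵥ y) := by
  have h := congrArg (y ⬝ᵥ ·) h₂
  simp only [dotProduct_add, dotProduct_sub, dotProduct_smul, smul_eq_mul] at h
  rw [sub_smul_mulVec_eq h₁, dotProduct_neg, dotProduct_transpose_mulVec]
  linarith

theorem neg_mul_le_of_last_row (hE : E.PosSemidef)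
    (h₃ : C *ᵥ y + E *ᵥ z = lam • (S₂til *ᵥ z)) :
    -lam * (z ⬝ᵥ S₂til *ᵥ z) ≤ -(y ⬝ᵥ Cᵀ *ᵥ z) := by
  have h := congrArg (z ⬝ᵥ ·) h₃
  simp only [dotProduct_add, dotProduct_smul, smul_eq_mul] at h
  have he : 0 ≤ z ⬝ᵥ E *ᵥ z := hE.dotProduct_mulVec_nonneg z
  rw [dotProduct_transpose_mulVec]
  linarith

theorem middle_ne_zero (hA : A.PosDef) (hAtil : Atil.PosSemidef) (hE : E.PosSemidef)
    (hS₂til : S₂til.PosDef) (hlam : lam < 0) (h₁ : A *ᵥ x + Bᵀ *ᵥ y = lam • (Atil *ᵥ x))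
    (h₃ : C *ᵥ y + E *ᵥ z = lam • (S₂til *ᵥ z)) (hv : Sum.elim (Sum.elim x y) z ≠ 0) :
    y ≠ 0 := by
  rintro rfl
  rw [mulVec_zero, add_zero] at h₁
  rw [mulVec_zero, zero_add] at h₃
  have hx : x = 0 := hA.eq_zero_of_mulVec_eq_smul hAtil hlam.le h₁
  have hz : z = 0 := by
    refine hS₂til.eq_zero_of_mulVec_eq_smul hE (inv_nonpos.mpr hlam.le) ?_
    rw [h₃, smul_smul, inv_mul_cancel₀ hlam.ne, one_smul]
  subst hx hz
  exact hv (by ext ((i | i) | i) <;> rfl)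

theorem alpha_mul_alpha_le [DecidableEq n] {α₀ α₁ η : ℝ} (hA : A.PosDef)
    (hAtil : Atil.PosSemidef) (hD : D.PosSemidef) (hE : E.PosSemidef) (hS₁til : S₁til.PosDef)
    (hS₂til : S₂til.PosSemidef) (hα₀ : 0 < α₀) (hη : 0 ≤ η) (hlam : lam < 0)
    (hAequiv : ∀ w, α₀ * (w ⬝ᵥ Atil *ᵥ w) ≤ w ⬝ᵥ A *ᵥ w)
    (hS₁equiv : α₁ * (y ⬝ᵥ S₁til *ᵥ y) ≤ y ⬝ᵥ D *ᵥ y + y ⬝ᵥ (B * A⁻¹ * Bᵀ) *ᵥ y)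
    (hDη : y ⬝ᵥ D *ᵥ y ≤ η * (y ⬝ᵥ (B * A⁻¹ * Bᵀ) *ᵥ y))
    (h₁ : A *ᵥ x + Bᵀ *ᵥ y = lam • (Atil *ᵥ x))
    (h₂ : B *ᵥ x - D *ᵥ y + Cᵀ *ᵥ z = lam • (S₁til *ᵥ y))
    (h₃ : C *ᵥ y + E *ᵥ z = lam • (S₂til *ᵥ z)) (hy : y ≠ 0) :
    α₀ * α₁ ≤ (1 + η) * (-lam * (α₀ - lam)) := by
  have hG := hA.posSemidef.sub_smul hAtil hlam.le
  have hGA : ∀ w, α₀ * (w ⬝ᵥ (A - lam • Atil) *ᵥ w) ≤ (α₀ - lam) * (w ⬝ᵥ A *ᵥ w) := fun w => by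
    rw [dotProduct_sub_smul_mulVec]
    nlinarith [hAequiv w]
  have hrB := hA.mul_dotProduct_inv_mulVec_le hG hα₀.le (by linarith) hGA (sub_smul_mulVec_eq h₁)
  rw [mulVec_neg, dotProduct_neg, neg_dotProduct, neg_neg,
    ← dotProduct_mul_mul_transpose_mulVec] at hrB
  have hrow := middle_row h₁ h₂
  have hγ := neg_mul_le_of_last_row hE h₃
  have ht : 0 ≤ z ⬝ᵥ S₂til *ᵥ z := hS₂til.dotProduct_mulVec_nonneg z
  have hd : 0 ≤ y ⬝ᵥ D *ᵥ y := hD.dotProduct_mulVec_nonneg y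
  set g := x ⬝ᵥ (A - lam • Atil) *ᵥ x
  set rB := y ⬝ᵥ (B * A⁻¹ * Bᵀ) *ᵥ y
  set s := y ⬝ᵥ S₁til *ᵥ y
  have hs : 0 < s := hS₁til.dotProduct_mulVec_pos hy
  have hgs : g ≤ -lam * s := by linarith [mul_nonneg (neg_nonneg.mpr hlam.le) ht]
  refine le_of_mul_le_mul_right ?_ hs
  calc α₀ * α₁ * s = α₀ * (α₁ * s) := by ring
    _ ≤ α₀ * ((1 + η) * rB) := mul_le_mul_of_nonneg_left (by linarith) hα₀.le
    _ = (1 + η) * (α₀ * rB) := by ring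
    _ ≤ (1 + η) * ((α₀ - lam) * (-lam * s)) := by
      refine mul_le_mul_of_nonneg_left (hrB.trans ?_) (by linarith)
      exact mul_le_mul_of_nonneg_left hgs (by linarith)
    _ = (1 + η) * (-lam * (α₀ - lam)) * s := by ring

theorem schur_mul_le [DecidableEq n] {β₀ K : ℝ} (hA : A.PosDef) (hAtil : Atil.PosSemidef)
    (hβ₀ : 0 ≤ β₀) (hlam : lam ≤ 0) (hx : x ⬝ᵥ A *ᵥ x ≤ β₀ * (x ⬝ᵥ Atil *ᵥ x))
    (hK : y ⬝ᵥ (B * A⁻¹ * Bᵀ) *ᵥ y ≤ K) (h₁ : A *ᵥ x + Bᵀ *ᵥ y = lam • (Atil *ᵥ x)) :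
    x ⬝ᵥ (A - lam • Atil) *ᵥ x * (β₀ - lam) ≤ β₀ * K := by
  have hg : x ⬝ᵥ (A - lam • Atil) *ᵥ x = -(x ⬝ᵥ Bᵀ *ᵥ y) := by
    rw [sub_smul_mulVec_eq h₁, dotProduct_neg]
  refine mul_le_of_sq_le_mul (P := x ⬝ᵥ A *ᵥ x)
    ((hA.posSemidef.sub_smul hAtil hlam).dotProduct_mulVec_nonneg x)
    (by linarith) ?_ hβ₀ ?_ ?_ hK
  · exact hA.dotProduct_mul_inv_mul_transpose_mulVec_nonneg B y
  · rw [hg, neg_sq, dotProduct_mul_mul_transpose_mulVec]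
    exact hA.sq_dotProduct_le x (Bᵀ *ᵥ y)
  · rw [dotProduct_sub_smul_mulVec]
    nlinarith [mul_le_mul_of_nonneg_left hx (neg_nonneg.mpr hlam)]

theorem coupling_mul_le [DecidableEq m] {S₁ : Matrix m m ℝ} {β₂ K : ℝ} (hS₁ : S₁.PosDef)
    (hE : E.PosSemidef) (hS₂til : S₂til.PosSemidef) (hβ₂ : 0 ≤ β₂) (hlam : lam ≤ 0)
    (hz : z ⬝ᵥ E *ᵥ z + z ⬝ᵥ (C * S₁⁻¹ * Cᵀ) *ᵥ z ≤ β₂ * (z ⬝ᵥ S₂til *ᵥ z))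
    (hK : y ⬝ᵥ S₁ *ᵥ y ≤ K) (h₃ : C *ᵥ y + E *ᵥ z = lam • (S₂til *ᵥ z)) :
    -(y ⬝ᵥ Cᵀ *ᵥ z) * -lam ≤ β₂ * K := by
  have hγ := neg_mul_le_of_last_row hE h₃
  have hlam' : 0 ≤ -lam := neg_nonneg.mpr hlam
  have ht : 0 ≤ z ⬝ᵥ S₂til *ᵥ z := hS₂til.dotProduct_mulVec_nonneg z
  have he : 0 ≤ z ⬝ᵥ E *ᵥ z := hE.dotProduct_mulVec_nonneg z
  refine mul_le_of_sq_le_mul (P := z ⬝ᵥ (C * S₁⁻¹ * Cᵀ) *ᵥ z) (by linarith [mul_nonneg hlam' ht])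
    hlam' (hS₁.posSemidef.dotProduct_mulVec_nonneg y) hβ₂ ?_ ?_ hK
  · rw [neg_sq, mul_comm, dotProduct_mul_mul_transpose_mulVec]
    exact hS₁.sq_dotProduct_le y (Cᵀ *ᵥ z)
  · nlinarith [mul_le_mul_of_nonneg_left hγ hβ₂]

theorem cubic_nonneg [DecidableEq n] [DecidableEq m] {S₁ : Matrix m m ℝ} {α₀ β₀ β₁ β₂ : ℝ}
    (hA : A.PosDef) (hAtil : Atil.PosSemidef) (hD : D.PosSemidef) (hE : E.PosSemidef)
    (hS₁ : S₁.PosDef) (hS₁til : S₁til.PosDef) (hS₂til : S₂til.PosSemidef) (hα₀ : 0 ≤ α₀)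
    (hα₀β₀ : α₀ ≤ β₀) (hβ₂ : 0 ≤ β₂) (hlam : lam ≤ 0)
    (hx : x ⬝ᵥ A *ᵥ x ≤ β₀ * (x ⬝ᵥ Atil *ᵥ x))
    (hS₁y : y ⬝ᵥ S₁ *ᵥ y = y ⬝ᵥ D *ᵥ y + y ⬝ᵥ (B * A⁻¹ * Bᵀ) *ᵥ y)
    (hS₁β : y ⬝ᵥ S₁ *ᵥ y ≤ β₁ * (y ⬝ᵥ S₁til *ᵥ y))
    (hS₂β : z ⬝ᵥ E *ᵥ z + z ⬝ᵥ (C * S₁⁻¹ * Cᵀ) *ᵥ z ≤ β₂ * (z ⬝ᵥ S₂til *ᵥ z))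
    (h₁ : A *ᵥ x + Bᵀ *ᵥ y = lam • (Atil *ᵥ x))
    (h₂ : B *ᵥ x - D *ᵥ y + Cᵀ *ᵥ z = lam • (S₁til *ᵥ y))
    (h₃ : C *ᵥ y + E *ᵥ z = lam • (S₂til *ᵥ z)) (hy : y ≠ 0) :
    0 ≤ lam ^ 3 + (β₁ - α₀) * lam ^ 2 - (α₀ * β₁ + β₀ * β₁ + β₁ * β₂) * lam
      + α₀ * β₁ * β₂ := by
  have hd : 0 ≤ y ⬝ᵥ D *ᵥ y := hD.dotProduct_mulVec_nonneg y
  have hrB := hA.dotProduct_mul_inv_mul_transpose_mulVec_nonneg B y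
  have hg := (hA.posSemidef.sub_smul hAtil hlam).dotProduct_mulVec_nonneg x
  have hschur := schur_mul_le (K := β₁ * (y ⬝ᵥ S₁til *ᵥ y)) hA hAtil (hα₀.trans hα₀β₀) hlam hx
    (by linarith) h₁
  have hcoupling := coupling_mul_le hS₁ hE hS₂til hβ₂ hlam hS₂β hS₁β h₃
  have hrow := middle_row h₁ h₂
  have hs : 0 < y ⬝ᵥ S₁til *ᵥ y := hS₁til.dotProduct_mulVec_pos hy
  have hdβ : y ⬝ᵥ D *ᵥ y ≤ β₁ * (y ⬝ᵥ S₁til *ᵥ y) := by linarith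
  have hα₀lam : 0 ≤ α₀ - lam := by linarith
  have hlam' : 0 ≤ -lam := by linarith
  refine nonneg_of_mul_nonneg_left ?_ hs
  linear_combination mul_nonneg (sub_nonneg.mpr hschur) hlam'
    + mul_nonneg (mul_nonneg hg (sub_nonneg.mpr hα₀β₀)) hlam'
    + mul_nonneg (mul_nonneg (sub_nonneg.mpr hdβ) hα₀lam) hlam'
    + mul_nonneg (sub_nonneg.mpr hcoupling) hα₀lam + (α₀ - lam) * lam * hrow

end SaddlePoint

theorem stmt_18_general (n m p : ℕ)
    (A : Matrix (Fin n) (Fin n) ℝ) (B : Matrix (Fin m) (Fin n) ℝ)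
    (C : Matrix (Fin p) (Fin m) ℝ) (D : Matrix (Fin m) (Fin m) ℝ)
    (E : Matrix (Fin p) (Fin p) ℝ)
    (hA : A.PosDef) (hD : D.PosSemidef) (hE : E.PosSemidef)
    (S₁ : Matrix (Fin m) (Fin m) ℝ) (hS₁ : S₁ = D + B * A⁻¹ * Bᵀ)
    (S₂ : Matrix (Fin p) (Fin p) ℝ) (hS₂ : S₂ = E + C * S₁⁻¹ * Cᵀ)
    (hS₁pd : S₁.PosDef)
    (Atil : Matrix (Fin n) (Fin n) ℝ) (S₁til : Matrix (Fin m) (Fin m) ℝ)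
    (S₂til : Matrix (Fin p) (Fin p) ℝ)
    (hAtil : Atil.PosDef) (hS₁til : S₁til.PosDef) (hS₂til : S₂til.PosDef)
    (α₀ β₀ α₁ β₁ α₂ β₂ : ℝ)
    (hα₀ : 0 < α₀) (hα₀1 : α₀ ≤ 1) (hβ₀ : 1 ≤ β₀)
    (hβ₁ : 1 ≤ β₁) (hβ₂ : 1 ≤ β₂)
    (hAequiv : ∀ x : Fin n → ℝ,
      α₀ * (x ⬝ᵥ Atil.mulVec x) ≤ x ⬝ᵥ A.mulVec x ∧
      x ⬝ᵥ A.mulVec x ≤ β₀ * (x ⬝ᵥ Atil.mulVec x))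
    (hS₁equiv : ∀ y : Fin m → ℝ,
      α₁ * (y ⬝ᵥ S₁til.mulVec y) ≤ y ⬝ᵥ S₁.mulVec y ∧
      y ⬝ᵥ S₁.mulVec y ≤ β₁ * (y ⬝ᵥ S₁til.mulVec y))
    (hS₂equiv : ∀ z : Fin p → ℝ,
      α₂ * (z ⬝ᵥ S₂til.mulVec z) ≤ z ⬝ᵥ S₂.mulVec z ∧
      z ⬝ᵥ S₂.mulVec z ≤ β₂ * (z ⬝ᵥ S₂til.mulVec z))
    (ηD : ℝ) (hηD0 : 0 ≤ ηD)
    (hηD : ∀ y : Fin m → ℝ, y ⬝ᵥ D.mulVec y ≤ ηD * (y ⬝ᵥ (B * A⁻¹ * Bᵀ).mulVec y))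
    (K : Matrix ((Fin n ⊕ Fin m) ⊕ Fin p) ((Fin n ⊕ Fin m) ⊕ Fin p) ℝ)
    (hK : K = fromBlocks (fromBlocks A Bᵀ B (-D)) (fromRows 0 Cᵀ) (fromCols 0 C) E)
    (Mtil : Matrix ((Fin n ⊕ Fin m) ⊕ Fin p) ((Fin n ⊕ Fin m) ⊕ Fin p) ℝ)
    (hMtil : Mtil = fromBlocks (fromBlocks Atil 0 0 S₁til) 0 0 S₂til)
    -- ρw is the unique negative root of w
    (ρw : ℝ) (hρwneg : ρw < 0)
    (hρw : ρw ^ 3 + (β₁ - α₀) * ρw ^ 2 - (α₀ * β₁ + β₀ * β₁ + β₁ * β₂) * ρw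
        + α₀ * β₁ * β₂ = 0) :
    ∀ (lam : ℝ) (v : (Fin n ⊕ Fin m) ⊕ Fin p → ℝ), v ≠ 0 →
      K.mulVec v = lam • Mtil.mulVec v → lam < 0 →
      ρw ≤ lam ∧
      lam ≤ (β₀ - Real.sqrt (β₀ ^ 2 + 4 * (α₀ * α₁) / (1 + ηD))) / 2 := by
  intro lam v hv hKv hlam
  obtain ⟨x, y, z, rfl⟩ : ∃ x y z, v = Sum.elim (Sum.elim x y) z :=
    ⟨_, _, _, by ext ((i | i) | i) <;> rfl⟩
  subst hK hMtil
  obtain ⟨h₁, h₂, h₃⟩ := SaddlePoint.mulVec_eq_smul_mulVec_iff.mp hKv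
  have hy := SaddlePoint.middle_ne_zero hA hAtil.posSemidef hE hS₂til hlam h₁ h₃ hv
  have hS₁y : y ⬝ᵥ S₁ *ᵥ y = y ⬝ᵥ D *ᵥ y + y ⬝ᵥ (B * A⁻¹ * Bᵀ) *ᵥ y := by
    rw [hS₁, add_mulVec, dotProduct_add]
  have hS₂z : z ⬝ᵥ S₂ *ᵥ z = z ⬝ᵥ E *ᵥ z + z ⬝ᵥ (C * S₁⁻¹ * Cᵀ) *ᵥ z := by
    rw [hS₂, add_mulVec, dotProduct_add]
  have hcubic := SaddlePoint.cubic_nonneg hA hAtil.posSemidef hD hE hS₁pd hS₁til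
    hS₂til.posSemidef hα₀.le (by linarith) (by linarith) hlam.le (hAequiv x).2 hS₁y (hS₁equiv y).2
    (hS₂z ▸ (hS₂equiv z).2) h₁ h₂ h₃ hy
  have hupper := SaddlePoint.alpha_mul_alpha_le hA hAtil.posSemidef hD hE hS₁til
    hS₂til.posSemidef hα₀ hηD0 hlam (fun w => (hAequiv w).1) (hS₁y ▸ (hS₁equiv y).1) (hηD y)
    h₁ h₂ h₃ hy
  refine ⟨le_of_cubic_nonneg (by positivity) (by positivity) hρwneg hρw hlam.le hcubic,
    le_half_sub_sqrt_of_le (by linarith) ?_⟩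
  calc 4 * (α₀ * α₁) / (1 + ηD) ≤ 4 * (-lam * (α₀ - lam)) := by
        rw [div_le_iff₀ (by positivity)]
        linarith
    _ ≤ 4 * (lam ^ 2 - β₀ * lam) := by nlinarith

/-- Negative eigenvalue bounds for the approximately preconditioned matrix `M̃⁻¹K`:
every negative eigenvalue lies in `[ρ_w, (β₀ − √(β₀² + 4α₀α₁/(1+η_D)))/2]`. -/
theorem stmt_18 (n m p : ℕ) (hp : 0 < p) (hmp : p ≤ m) (hnm : m ≤ n)
    (A : Matrix (Fin n) (Fin n) ℝ) (B : Matrix (Fin m) (Fin n) ℝ)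
    (C : Matrix (Fin p) (Fin m) ℝ) (D : Matrix (Fin m) (Fin m) ℝ)
    (E : Matrix (Fin p) (Fin p) ℝ)
    (hA : A.PosDef) (hD : D.PosSemidef) (hE : E.PosSemidef)
    (hB : B.rank = m) (hC : C.rank = p)
    (S₁ : Matrix (Fin m) (Fin m) ℝ) (hS₁ : S₁ = D + B * A⁻¹ * Bᵀ)
    (S₂ : Matrix (Fin p) (Fin p) ℝ) (hS₂ : S₂ = E + C * S₁⁻¹ * Cᵀ)
    (hS₁pd : S₁.PosDef) (hS₂pd : S₂.PosDef)
    (Atil : Matrix (Fin n) (Fin n) ℝ) (S₁til : Matrix (Fin m) (Fin m) ℝ)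
    (S₂til : Matrix (Fin p) (Fin p) ℝ)
    (hAtil : Atil.PosDef) (hS₁til : S₁til.PosDef) (hS₂til : S₂til.PosDef)
    (α₀ β₀ α₁ β₁ α₂ β₂ : ℝ)
    (hα₀ : 0 < α₀) (hα₀1 : α₀ ≤ 1) (hβ₀ : 1 ≤ β₀)
    (hα₁ : 0 < α₁) (hα₁1 : α₁ ≤ 1) (hβ₁ : 1 ≤ β₁)
    (hα₂ : 0 < α₂) (hα₂1 : α₂ ≤ 1) (hβ₂ : 1 ≤ β₂)
    (hAequiv : ∀ x : Fin n → ℝ,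
      α₀ * (x ⬝ᵥ Atil.mulVec x) ≤ x ⬝ᵥ A.mulVec x ∧
      x ⬝ᵥ A.mulVec x ≤ β₀ * (x ⬝ᵥ Atil.mulVec x))
    (hS₁equiv : ∀ y : Fin m → ℝ,
      α₁ * (y ⬝ᵥ S₁til.mulVec y) ≤ y ⬝ᵥ S₁.mulVec y ∧
      y ⬝ᵥ S₁.mulVec y ≤ β₁ * (y ⬝ᵥ S₁til.mulVec y))
    (hS₂equiv : ∀ z : Fin p → ℝ,
      α₂ * (z ⬝ᵥ S₂til.mulVec z) ≤ z ⬝ᵥ S₂.mulVec z ∧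
      z ⬝ᵥ S₂.mulVec z ≤ β₂ * (z ⬝ᵥ S₂til.mulVec z))
    (ηD : ℝ) (hηD0 : 0 ≤ ηD)
    (hηD : ∀ y : Fin m → ℝ, y ⬝ᵥ D.mulVec y ≤ ηD * (y ⬝ᵥ (B * A⁻¹ * Bᵀ).mulVec y))
    (ηE : ℝ) (hηE0 : 0 ≤ ηE)
    (hηE : ∀ z : Fin p → ℝ, z ⬝ᵥ E.mulVec z ≤ ηE * (z ⬝ᵥ (C * S₁⁻¹ * Cᵀ).mulVec z))
    (K : Matrix ((Fin n ⊕ Fin m) ⊕ Fin p) ((Fin n ⊕ Fin m) ⊕ Fin p) ℝ)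
    (hK : K = fromBlocks (fromBlocks A Bᵀ B (-D)) (fromRows 0 Cᵀ) (fromCols 0 C) E)
    (Mtil : Matrix ((Fin n ⊕ Fin m) ⊕ Fin p) ((Fin n ⊕ Fin m) ⊕ Fin p) ℝ)
    (hMtil : Mtil = fromBlocks (fromBlocks Atil 0 0 S₁til) 0 0 S₂til)
    -- ρw is the unique negative root of w
    (ρw : ℝ) (hρwneg : ρw < 0)
    (hρw : ρw ^ 3 + (β₁ - α₀) * ρw ^ 2 - (α₀ * β₁ + β₀ * β₁ + β₁ * β₂) * ρw
        + α₀ * β₁ * β₂ = 0) :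
    ∀ (lam : ℝ) (v : (Fin n ⊕ Fin m) ⊕ Fin p → ℝ), v ≠ 0 →
      K.mulVec v = lam • Mtil.mulVec v → lam < 0 →
      ρw ≤ lam ∧
      lam ≤ (β₀ - Real.sqrt (β₀ ^ 2 + 4 * (α₀ * α₁) / (1 + ηD))) / 2 :=
  stmt_18_general n m p A B C D E hA hD hE S₁ hS₁ S₂ hS₂ hS₁pd Atil S₁til S₂til hAtil hS₁til hS₂til
    α₀ β₀ α₁ β₁ α₂ β₂ hα₀ hα₀1 hβ₀ hβ₁ hβ₂ hAequiv hS₁equiv hS₂equiv ηD hηD0 hηD K hK Mtil hMtil ρw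
    hρwneg hρw
end
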